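/- arXiv:2509.00265 — 2 statements merged into one kernel-verified Lean document; each statement's English description precedes it below -/
import Mathlib

section
/- Let P be a finite partially ordered set whose Hasse diagram contains no collider, i.e., there do not exist elements a, b, c of P with a ≠ b, a ⋖ c, and b ⋖ c. Define the linear map M : ℝ^P → ℝ^P by (M f)(y) = ∑_{x ≤ y} f(x). Then M restricts to a bijection from the nonnegative orthant {f ∈ ℝ^P : f(x) ≥ 0 for all x} onto the order cone C(P). -/
/-!
The transform `M f y = ∑_{x ≤ y} f x` is unitriangular, hence injective. Without colliders every
element `y` has at most one lower cover `z`, and then `{x | x < y} = {x | x ≤ z}`, so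
`M f y = f y + M f z`. Hence `M` is inverted by `f y = g y - ∑_{z ⋖ y} g z`, a sum with at most
one term, which is nonnegative when `g` is nonnegative and monotone.
-/

open Classical in
def orderCone (P : Type*) [PartialOrder P] : Set (P → ℝ) :=
  {f | (∀ x, 0 ≤ f x) ∧ ∀ ⦃x y : P⦄, x ≤ y → f x ≤ f y}

open Finset

section
variable {P β : Type*} [PartialOrder P] [Fintype P]

open Classical

noncomputable def zetaTransform [AddCommMonoid β] (f : P → β) (y : P) : β :=
  ∑ x, if x ≤ y then f x else 0

theorem zetaTransform_eq_sum_filter [AddCommMonoid β] (f : P → β) (y : P) :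
    zetaTransform f y = ∑ x with x ≤ y, f x :=
  (sum_filter _ _).symm

theorem zetaTransform_eq_add_sum_lt [AddCommMonoid β] (f : P → β) (y : P) :
    zetaTransform f y = f y + ∑ x with x < y, f x := by
  have h : ({x | x ≤ y} : Finset P) = cons y {x | x < y} (by simp) := by
    ext x
    simp [le_iff_eq_or_lt]
  rw [zetaTransform_eq_sum_filter, h, sum_cons]

theorem zetaTransform_injective [AddCancelCommMonoid β] :
    Function.Injective (zetaTransform : (P → β) → P → β) := by
  intro f g hfg
  funext y
  induction y using WellFoundedLT.induction with
  | ind y ih =>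
    have hlt : ∑ x with x < y, f x = ∑ x with x < y, g x :=
      sum_congr rfl fun x hx => ih x (mem_filter.1 hx).2
    have hy := congrFun hfg y
    rw [zetaTransform_eq_add_sum_lt, zetaTransform_eq_add_sum_lt, hlt] at hy
    exact add_right_cancel hy

section Ordered
variable [AddCommMonoid β] [PartialOrder β] [IsOrderedAddMonoid β] {f : P → β}

theorem zetaTransform_nonneg (hf : ∀ x, 0 ≤ f x) (y : P) : 0 ≤ zetaTransform f y := by
  rw [zetaTransform_eq_sum_filter]
  exact sum_nonneg fun x _ => hf x

theorem monotone_zetaTransform (hf : ∀ x, 0 ≤ f x) : Monotone (zetaTransform f) := by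
  intro y₁ y₂ h
  simp only [zetaTransform_eq_sum_filter]
  refine sum_le_sum_of_subset_of_nonneg (fun x hx => ?_) fun x _ _ => hf x
  simp only [mem_filter, mem_univ, true_and] at hx ⊢
  exact hx.trans h

end Ordered

theorem lt_iff_exists_le_covBy {x y : P} : x < y ↔ ∃ z, x ≤ z ∧ z ⋖ y :=
  ⟨exists_le_covBy_of_lt, fun ⟨_, hxz, hzy⟩ => hxz.trans_lt hzy.lt⟩

theorem card_filter_covBy_le_one (hcov : ∀ ⦃a b c : P⦄, a ⋖ c → b ⋖ c → a = b) (y : P) :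
    #{z | z ⋖ y} ≤ 1 :=
  card_le_one.2 fun _ ha _ hb => hcov (mem_filter.1 ha).2 (mem_filter.1 hb).2

theorem sum_lt_eq_sum_covBy_zetaTransform [AddCommMonoid β]
    (hcov : ∀ ⦃a b c : P⦄, a ⋖ c → b ⋖ c → a = b) (f : P → β) (y : P) :
    ∑ x with x < y, f x = ∑ z with z ⋖ y, zetaTransform f z := by
  have hdisj : (({z | z ⋖ y} : Finset P) : Set P).PairwiseDisjoint
      fun z => ({x | x ≤ z} : Finset P) :=
    Set.Subsingleton.pairwise (fun _ ha _ hb => hcov (mem_filter.1 ha).2 (mem_filter.1 hb).2) _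
  have hlt : ({x | x < y} : Finset P) =
      ({z | z ⋖ y} : Finset P).biUnion fun z => {x | x ≤ z} := by
    ext x
    simp [lt_iff_exists_le_covBy, and_comm]
  simp only [zetaTransform_eq_sum_filter, hlt, sum_biUnion hdisj]

theorem zetaTransform_sub_sum_covBy [AddCommGroup β]
    (hcov : ∀ ⦃a b c : P⦄, a ⋖ c → b ⋖ c → a = b) (g : P → β) :
    zetaTransform (fun y => g y - ∑ z with z ⋖ y, g z) = g := by
  funext y
  induction y using WellFoundedLT.induction with
  | ind y ih =>
    have hcovers : ∑ z with z ⋖ y, zetaTransform (fun y => g y - ∑ z with z ⋖ y, g z) z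
        = ∑ z with z ⋖ y, g z :=
      sum_congr rfl fun z hz => ih z (mem_filter.1 hz).2.lt
    rw [zetaTransform_eq_add_sum_lt, sum_lt_eq_sum_covBy_zetaTransform hcov, hcovers,
      sub_add_cancel]

theorem sum_covBy_le [AddCommMonoid β] [PartialOrder β] [IsOrderedAddMonoid β]
    (hcov : ∀ ⦃a b c : P⦄, a ⋖ c → b ⋖ c → a = b) {g : P → β} (hg₀ : ∀ x, 0 ≤ g x)
    (hg : Monotone g) (y : P) : ∑ z with z ⋖ y, g z ≤ g y :=
  calc ∑ z with z ⋖ y, g z ≤ #{z | z ⋖ y} • g y :=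
        sum_le_card_nsmul _ _ _ fun _ hz => hg (mem_filter.1 hz).2.le
    _ ≤ 1 • g y := nsmul_le_nsmul_left (hg₀ y) (card_filter_covBy_le_one hcov y)
    _ = g y := one_nsmul _

end

open Classical in
/-- for a finite poset with no collider in its Hasse diagram, the Möbius
transform `(M f)(y) = ∑_{x ≤ y} f(x)` maps the nonnegative orthant bijectively onto the
order cone `C(P)`. -/
theorem mobius_bijOn_orthant_orderCone
    (P : Type*) [Fintype P] [PartialOrder P]
    (hnc : ¬ ∃ a b c : P, a ≠ b ∧ a ⋖ c ∧ b ⋖ c) :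
    Set.BijOn (fun (f : P → ℝ) (y : P) => ∑ x : P, if x ≤ y then f x else 0)
      {f : P → ℝ | ∀ x, 0 ≤ f x} (orderCone P) := by
  have hcov : ∀ ⦃a b c : P⦄, a ⋖ c → b ⋖ c → a = b := fun a b c ha hb =>
    by_contra fun hab => hnc ⟨a, b, c, hab, ha, hb⟩
  show Set.BijOn zetaTransform _ _
  refine ⟨fun f hf => ⟨zetaTransform_nonneg hf, monotone_zetaTransform hf⟩,
    zetaTransform_injective.injOn, fun g ⟨hg₀, hg⟩ => ?_⟩
  exact ⟨_, fun y => sub_nonneg.2 (sum_covBy_le hcov hg₀ hg y),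
    zetaTransform_sub_sum_covBy hcov g⟩
end

section
/- Let R : {1,…,p₁} × {1,…,p₂} → ℝ be an entrywise-nonnegative matrix and define its cumulative-sum matrix F : {1,…,p₁} × {1,…,p₂} → ℝ by F(i,j) = ∑_{i' ≤ i} ∑_{j' ≤ j} R(i',j'). Then for every r ∈ ℕ, R admits a factorization R(i,j) = ∑_{l=1}^r u_l(i)·w_l(j) with all u_l and w_l entrywise nonnegative if and only if F admits a factorization F(i,j) = ∑_{l=1}^r a_l(i)·b_l(j) with each a_l : {1,…,p₁} → ℝ and each b_l : {1,…,p₂} → ℝ nonnegative and nondecreasing. Consequently the nonnegative rank of R equals the ND rank of F with respect to the chain orders on {1,…,p₁} and {1,…,p₂}. -/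
/-!
Cumulative summation `f ↦ (i ↦ ∑_{i' ≤ i} f i')` turns nonnegative vectors into nonnegative
nondecreasing ones, and on a chain the backward difference inverts it. Applied in both
coordinates, it maps each rank-one term `u ⊗ w` of a nonnegative factorization of `R` to the
rank-one term `(cumSum u) ⊗ (cumSum w)` of an ND factorization of `F`, and backward differences
carry ND factorizations of `F` back; injectivity of the two-dimensional cumulative sum
identifies the result with `R`.
-/

/-- `S` admits a nonnegative factorization with `r` terms. -/
def HasNNFact {I₁ I₂ : Type*} (S : I₁ → I₂ → ℝ) (r : ℕ) : Prop :=
  ∃ (u : Fin r → I₁ → ℝ) (w : Fin r → I₂ → ℝ),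
    (∀ i x, 0 ≤ u i x) ∧ (∀ i y, 0 ≤ w i y) ∧
    ∀ x y, S x y = ∑ i, u i x * w i y

/-- `F` admits a factorization with `r` terms into products of nonnegative nondecreasing
vectors (an ND factorization with respect to the chain orders). -/
def HasChainNDFact {p₁ p₂ : ℕ} (F : Fin p₁ → Fin p₂ → ℝ) (r : ℕ) : Prop :=
  ∃ (a : Fin r → Fin p₁ → ℝ) (b : Fin r → Fin p₂ → ℝ),
    (∀ l, (∀ i, 0 ≤ a l i) ∧ Monotone (a l)) ∧
    (∀ l, (∀ j, 0 ≤ b l j) ∧ Monotone (b l)) ∧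
    ∀ i j, F i j = ∑ l, a l i * b l j

open Finset Order

section CumulativeSum

variable {α β M : Type*}

def cumSum [Preorder α] [LocallyFiniteOrderBot α] [AddCommMonoid M] (f : α → M) (i : α) : M :=
  ∑ j ∈ Iic i, f j

def cumSum₂ [Preorder α] [LocallyFiniteOrderBot α] [Preorder β] [LocallyFiniteOrderBot β]
    [AddCommMonoid M] (f : α → β → M) (i : α) (j : β) : M :=
  ∑ i' ∈ Iic i, ∑ j' ∈ Iic j, f i' j'

open Classical in
noncomputable def bwdDiff [Preorder α] [PredOrder α] [AddGroup M] (a : α → M) (i : α) : M :=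
  if IsMin i then a i else a i - a (pred i)

theorem cumSum_nonneg [Preorder α] [LocallyFiniteOrderBot α] [AddCommMonoid M] [PartialOrder M]
    [IsOrderedAddMonoid M] {f : α → M} (hf : ∀ i, 0 ≤ f i) (i : α) : 0 ≤ cumSum f i :=
  sum_nonneg fun k _ => hf k

theorem monotone_cumSum [Preorder α] [LocallyFiniteOrderBot α] [AddCommMonoid M] [PartialOrder M]
    [IsOrderedAddMonoid M] {f : α → M} (hf : ∀ i, 0 ≤ f i) : Monotone (cumSum f) :=
  fun _ _ hij => sum_le_sum_of_subset_of_nonneg (Iic_subset_Iic.mpr hij) fun k _ _ => hf k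

theorem bwdDiff_nonneg [Preorder α] [PredOrder α] [AddGroup M] [PartialOrder M]
    [AddRightMono M] {a : α → M} (h0 : ∀ i, 0 ≤ a i) (ha : Monotone a) (i : α) :
    0 ≤ bwdDiff a i := by
  unfold bwdDiff
  split_ifs
  · exact h0 i
  · exact sub_nonneg.mpr (ha (pred_le i))

theorem cumSum_injective [PartialOrder α] [LocallyFiniteOrderBot α] [WellFoundedLT α]
    [AddCancelCommMonoid M] : Function.Injective (cumSum : (α → M) → α → M) := by
  intro f g h
  funext i
  induction i using WellFoundedLT.induction with
  | _ i ih =>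
    have hIio : ∑ j ∈ Iio i, f j = ∑ j ∈ Iio i, g j :=
      sum_congr rfl fun j hj => ih j (mem_Iio.mp hj)
    have hIic := congrFun h i
    rw [cumSum, cumSum, ← sum_Iio_add_eq_sum_Iic, ← sum_Iio_add_eq_sum_Iic, hIio] at hIic
    exact add_left_cancel hIic

theorem cumSum₂_injective [PartialOrder α] [LocallyFiniteOrderBot α] [WellFoundedLT α]
    [PartialOrder β] [LocallyFiniteOrderBot β] [WellFoundedLT β] [AddCancelCommMonoid M] :
    Function.Injective (cumSum₂ : (α → β → M) → α → β → M) := by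
  intro f g h
  have hcol : ∀ j, (fun i => cumSum (f i) j) = fun i => cumSum (g i) j := fun j =>
    cumSum_injective (funext fun i => congrFun (congrFun h i) j)
  funext i
  exact cumSum_injective (funext fun j => congrFun (hcol j) i)

theorem cumSum_bwdDiff [LinearOrder α] [LocallyFiniteOrderBot α] [PredOrder α] [WellFoundedLT α]
    [AddCommGroup M] (a : α → M) : cumSum (bwdDiff a) = a := by
  funext i
  induction i using WellFoundedLT.induction with
  | _ i ih =>
    rw [cumSum, ← sum_Iio_add_eq_sum_Iic, bwdDiff]
    split_ifs with hi
    · rw [hi.finsetIio_eq, sum_empty, zero_add]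
    · rw [← Iic_pred_eq_Iio_of_not_isMin hi, ← cumSum, ih _ (pred_lt_of_not_isMin hi),
        add_sub_cancel]

theorem cumSum₂_sum_mul [Preorder α] [LocallyFiniteOrderBot α] [Preorder β]
    [LocallyFiniteOrderBot β] {ι S : Type*} [CommSemiring S] (s : Finset ι) (u : ι → α → S)
    (w : ι → β → S) :
    cumSum₂ (fun i j => ∑ l ∈ s, u l i * w l j) =
      fun i j => ∑ l ∈ s, cumSum (u l) i * cumSum (w l) j := by
  funext i j
  simp only [cumSum₂, cumSum, sum_mul_sum]
  exact (sum_congr rfl fun _ _ => sum_comm).trans sum_comm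

end CumulativeSum

theorem hasNNFact_iff_hasChainNDFact_cumSum₂ {p₁ p₂ r : ℕ} (R : Fin p₁ → Fin p₂ → ℝ) :
    HasNNFact R r ↔ HasChainNDFact (cumSum₂ R) r := by
  constructor
  · rintro ⟨u, w, hu, hw, hR⟩
    refine ⟨fun l => cumSum (u l), fun l => cumSum (w l),
      fun l => ⟨cumSum_nonneg (hu l), monotone_cumSum (hu l)⟩,
      fun l => ⟨cumSum_nonneg (hw l), monotone_cumSum (hw l)⟩, ?_⟩
    rw [show R = fun i j => ∑ l, u l i * w l j from funext₂ hR, cumSum₂_sum_mul]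
    exact fun _ _ => rfl
  · rintro ⟨a, b, ha, hb, hF⟩
    refine ⟨fun l => bwdDiff (a l), fun l => bwdDiff (b l),
      fun l => bwdDiff_nonneg (ha l).1 (ha l).2, fun l => bwdDiff_nonneg (hb l).1 (hb l).2, ?_⟩
    have hcum : cumSum₂ R = cumSum₂ fun i j => ∑ l, bwdDiff (a l) i * bwdDiff (b l) j := by
      simp only [cumSum₂_sum_mul, cumSum_bwdDiff]
      exact funext₂ hF
    exact congrFun₂ (cumSum₂_injective hcum)

theorem nnRank_eq_NDrank_of_cdf_general
    (p₁ p₂ : ℕ) (R : Fin p₁ → Fin p₂ → ℝ)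
    (F : Fin p₁ → Fin p₂ → ℝ)
    (hF : ∀ i j, F i j = ∑ i' ∈ Finset.Iic i, ∑ j' ∈ Finset.Iic j, R i' j') :
    (∀ r : ℕ, HasNNFact R r ↔ HasChainNDFact F r) ∧
    sInf {r : ℕ | HasNNFact R r} = sInf {r : ℕ | HasChainNDFact F r} := by
  obtain rfl : F = cumSum₂ R := funext₂ hF
  have key := fun r => hasNNFact_iff_hasChainNDFact_cumSum₂ (r := r) R
  exact ⟨key, congrArg sInf (Set.ext key)⟩

/-- a nonnegative matrix `R` has a nonnegative factorization with `r` terms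
iff its cumulative-sum matrix `F` has an ND factorization (w.r.t. the chain orders) with
`r` terms; hence the nonnegative rank of `R` equals the ND rank of `F`. -/
theorem nnRank_eq_NDrank_of_cdf
    (p₁ p₂ : ℕ) (R : Fin p₁ → Fin p₂ → ℝ) (hR : ∀ i j, 0 ≤ R i j)
    (F : Fin p₁ → Fin p₂ → ℝ)
    (hF : ∀ i j, F i j = ∑ i' ∈ Finset.Iic i, ∑ j' ∈ Finset.Iic j, R i' j') :
    (∀ r : ℕ, HasNNFact R r ↔ HasChainNDFact F r) ∧
    sInf {r : ℕ | HasNNFact R r} = sInf {r : ℕ | HasChainNDFact F r} :=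
  nnRank_eq_NDrank_of_cdf_general p₁ p₂ R F hF
end
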